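/- arXiv:2512.17174 — 4 statements merged into one kernel-verified Lean document; each statement's English description precedes it below -/
import Mathlib

section
/- Let N ≥ 1 and let m, g, h : ZMod N → ℝ be such that g i < 0 and h i > 0 for every i ∈ ZMod N. If for every i ∈ ZMod N one has (2*m i - m (i-1) - m (i+1)) * g i + (2*m (i-1) - m (i-2) - m i) * h i = 0, then m is constant: m i = m j for all i, j ∈ ZMod N. -/
/-- Equilibrium of the rotary-pointer phase dynamics forces equal workloads. -/
theorem equilibrium_workload_balance
    (N : ℕ) (hN : 1 ≤ N) (m g h : ZMod N → ℝ)
    (hg : ∀ i : ZMod N, g i < 0) (hh : ∀ i : ZMod N, h i > 0)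
    (heq : ∀ i : ZMod N,
      (2 * m i - m (i - 1) - m (i + 1)) * g i
        + (2 * m (i - 1) - m (i - 2) - m i) * h i = 0) :
    ∀ i j : ZMod N, m i = m j := by
  haveI : NeZero N := ⟨by omega⟩
  set d : ZMod N → ℝ := fun i => m i - m (i - 1) with hd
  have heq' : ∀ i : ZMod N, (d i - d (i + 1)) * g i + (d (i - 1) - d i) * h i = 0 := by
    intro i
    have e1 : i + 1 - 1 = i := by ring
    have e2 : i - 1 - 1 = i - 2 := by ring
    simp only [hd, e1, e2]
    linear_combination heq i
  obtain ⟨i0, hi0⟩ := Finite.exists_max d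
  have step : ∀ i : ZMod N, d i = d i0 → d (i + 1) = d i0 := by
    intro i hi
    have h1 : d (i + 1) ≤ d i := hi ▸ hi0 (i + 1)
    have h2 : d (i - 1) ≤ d i := hi ▸ hi0 (i - 1)
    have e := heq' i
    have hgi := hg i
    have hhi := hh i
    have t2 : (d (i - 1) - d i) * h i ≤ 0 :=
      mul_nonpos_of_nonpos_of_nonneg (by linarith) hhi.le
    have t1' : (d i - d (i + 1)) * g i = 0 := by nlinarith
    have hz : d i - d (i + 1) = 0 := by
      rcases mul_eq_zero.mp t1' with hz | hz
      · exact hz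
      · exact absurd hz (ne_of_lt hgi)
    linarith
  have all : ∀ n : ℕ, d (i0 + n) = d i0 := by
    intro n
    induction n with
    | zero => simp
    | succ k ih =>
      have hs := step (i0 + (k : ZMod N)) ih
      have e : (i0 + ((k + 1 : ℕ) : ZMod N)) = i0 + (k : ZMod N) + 1 := by
        push_cast; ring
      rw [e]; exact hs
  have dconst : ∀ j : ZMod N, d j = d i0 := by
    intro j
    have h1 := all ((j - i0).val)
    rw [show (((j - i0).val : ℕ) : ZMod N) = j - i0 from ZMod.natCast_rightInverse _] at h1
    rw [show i0 + (j - i0) = j by ring] at h1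
    exact h1
  have sum0 : ∑ i : ZMod N, d i = 0 := by
    simp only [hd]
    rw [Finset.sum_sub_distrib]
    have hsum : ∑ i : ZMod N, m (i - 1) = ∑ i : ZMod N, m i :=
      (Fintype.sum_equiv (Equiv.subRight (1 : ZMod N)) (fun i => m (i - 1)) m
        (fun i => rfl))
    rw [hsum]; ring
  have hc : d i0 = 0 := by
    have hcard : ∑ i : ZMod N, d i = (N : ℝ) * d i0 := by
      rw [Finset.sum_congr rfl (fun i _ => dconst i), Finset.sum_const]
      simp [ZMod.card]
    have hNpos : (0 : ℝ) < (N : ℝ) := by exact_mod_cast hN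
    have := hcard ▸ sum0
    have := mul_eq_zero.mp this
    rcases this with hh' | hh'
    · exact absurd hh' (ne_of_gt hNpos)
    · exact hh'
  have mstep : ∀ i : ZMod N, m (i + 1) = m i := by
    intro i
    have hz := (dconst (i + 1)).trans hc
    simp only [hd] at hz
    rw [show i + 1 - 1 = i by ring] at hz
    linarith
  have mall : ∀ (i : ZMod N) (n : ℕ), m (i + n) = m i := by
    intro i n
    induction n with
    | zero => simp
    | succ k ih =>
      have e : (i + ((k + 1 : ℕ) : ZMod N)) = i + (k : ZMod N) + 1 := by
        push_cast; ring
      rw [e, mstep, ih]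
  intro i j
  have h1 := mall i ((j - i).val)
  rw [show (((j - i).val : ℕ) : ZMod N) = j - i from ZMod.natCast_rightInverse _] at h1
  rw [show i + (j - i) = j by ring] at h1
  exact h1.symm
end

section
/- Let Ω be a measurable subset of ℝ² (as EuclideanSpace ℝ (Fin 2)) and let ρ : ℝ² → ℝ be such that ρ is integrable on Ω, q ↦ ρ(q) • q is integrable on Ω, and q ↦ ρ(q) * ‖q‖² is integrable on Ω. Set m = ∫_Ω ρ(q) dq, assume m > 0, and define c = m⁻¹ • ∫_Ω ρ(q) • q dq. Then for every p ∈ ℝ², the function F(p) = ∫_Ω ‖p - q‖² ρ(q) dq has gradient (2*m) • (p - c) at p (HasGradientAt F ((2*m) • (p - c)) p). -/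
open MeasureTheory
open scoped RealInnerProductSpace

/-- Gradient of the coverage cost: `∇_p J = 2m (p - c)`. -/
theorem coverage_cost_gradient
    (Ω : Set (EuclideanSpace ℝ (Fin 2))) (hΩ : MeasurableSet Ω)
    (ρ : EuclideanSpace ℝ (Fin 2) → ℝ)
    (hρ : IntegrableOn ρ Ω)
    (hρq : IntegrableOn (fun q => ρ q • q) Ω)
    (hρq2 : IntegrableOn (fun q => ρ q * ‖q‖ ^ 2) Ω)
    (m : ℝ) (hm_def : m = ∫ q in Ω, ρ q) (hm : 0 < m)
    (c : EuclideanSpace ℝ (Fin 2)) (hc : c = m⁻¹ • ∫ q in Ω, ρ q • q) :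
    ∀ p : EuclideanSpace ℝ (Fin 2),
      HasGradientAt (fun p' => ∫ q in Ω, ‖p' - q‖ ^ 2 * ρ q)
        ((2 * m) • (p - c)) p := by
  intro p
  have hmv : (∫ q in Ω, ρ q • q) = m • c := by
    rw [hc, smul_smul, mul_inv_cancel₀ hm.ne', one_smul]
  -- explicit formula for the cost
  have hF : ∀ p' : EuclideanSpace ℝ (Fin 2), (∫ q in Ω, ‖p' - q‖ ^ 2 * ρ q)
      = m * ‖p'‖ ^ 2 - 2 * ⟪p', ∫ q in Ω, ρ q • q⟫ + ∫ q in Ω, ρ q * ‖q‖ ^ 2 := by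
    intro p'
    have h1 : Integrable (fun q : EuclideanSpace ℝ (Fin 2) => ‖p'‖ ^ 2 * ρ q)
        (volume.restrict Ω) := hρ.const_mul _
    have h2 : Integrable (fun q : EuclideanSpace ℝ (Fin 2) => ⟪p', ρ q • q⟫)
        (volume.restrict Ω) :=
      ContinuousLinearMap.integrable_comp (innerSL ℝ p') hρq
    have heq : ∀ q : EuclideanSpace ℝ (Fin 2), ‖p' - q‖ ^ 2 * ρ q
        = (‖p'‖ ^ 2 * ρ q - 2 * ⟪p', ρ q • q⟫) + ρ q * ‖q‖ ^ 2 := by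
      intro q
      rw [norm_sub_sq_real, real_inner_smul_right]
      ring
    have h12 : Integrable (fun q : EuclideanSpace ℝ (Fin 2) =>
        ‖p'‖ ^ 2 * ρ q - 2 * ⟪p', ρ q • q⟫) (volume.restrict Ω) := h1.sub (h2.const_mul 2)
    have h2' : Integrable (fun q : EuclideanSpace ℝ (Fin 2) =>
        2 * ⟪p', ρ q • q⟫) (volume.restrict Ω) := h2.const_mul 2
    rw [integral_congr_ae (Filter.Eventually.of_forall heq),
      integral_add h12 hρq2, integral_sub h1 h2', integral_const_mul, integral_const_mul,
      integral_inner hρq, hm_def]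
    ring
  rw [hasGradientAt_iff_isLittleO]
  have key : (fun p' : EuclideanSpace ℝ (Fin 2) => (∫ q in Ω, ‖p' - q‖ ^ 2 * ρ q)
      - (∫ q in Ω, ‖p - q‖ ^ 2 * ρ q) - ⟪(2 * m) • (p - c), p' - p⟫)
      = fun p' => m * ‖p' - p‖ ^ 2 := by
    funext p'
    rw [hF p', hF p, hmv, norm_sub_sq_real p' p]
    simp only [real_inner_smul_left, real_inner_smul_right, inner_sub_left, inner_sub_right,
      real_inner_self_eq_norm_sq, real_inner_comm p' c, real_inner_comm p' p, real_inner_comm p c]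
    ring
  rw [key]
  rw [← Asymptotics.isLittleO_norm_right]
  have hrw : (fun p' : EuclideanSpace ℝ (Fin 2) => m * ‖p' - p‖ ^ 2)
      = fun p' => (m * ‖p' - p‖) * ‖p' - p‖ := by
    funext p'; ring
  rw [hrw]
  have h1 : (fun p' : EuclideanSpace ℝ (Fin 2) => m * ‖p' - p‖) =o[nhds p] (fun _ => (1 : ℝ)) := by
    rw [Asymptotics.isLittleO_one_iff]
    exact (continuous_const.mul ((continuous_id.sub continuous_const).norm)).tendsto' p 0
      (by simp)
  simpa using h1.mul_isBigO
    (Asymptotics.isBigO_refl (fun p' : EuclideanSpace ℝ (Fin 2) => ‖p' - p‖) _)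
end

section
/- Let E be a finite-dimensional real normed vector space, let κ > 0, and let v : ℝ → E be continuous with v(t) → 0 as t → +∞. Then the function t ↦ ∫ τ in 0..t, Real.exp(-κ*(t - τ)) • v(τ) dτ tends to 0 as t → +∞. -/
open Filter intervalIntegral

/-- The exponentially weighted convolution of a vanishing forcing term vanishes. -/
theorem exp_convolution_tendsto_zero
    {E : Type*} [NormedAddCommGroup E] [NormedSpace ℝ E] [FiniteDimensional ℝ E]
    (κ : ℝ) (hκ : 0 < κ) (v : ℝ → E) (hv : Continuous v)
    (hv0 : Tendsto v atTop (nhds 0)) :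
    Tendsto (fun t : ℝ =>
        ∫ τ in (0 : ℝ)..t, Real.exp (-κ * (t - τ)) • v τ)
      atTop (nhds 0) := by
  rw [NormedAddCommGroup.tendsto_nhds_zero]
  intro ε hε
  have hεκ : 0 < κ * ε / 2 := by positivity
  obtain ⟨T0, hT0⟩ := (Metric.tendsto_atTop.mp hv0) (κ * ε / 2) hεκ
  set T : ℝ := max T0 0 with hTdef
  have hT : (0 : ℝ) ≤ T := le_max_right _ _
  have htail : ∀ τ, T ≤ τ → ‖v τ‖ ≤ κ * ε / 2 := by
    intro τ hτ
    have := hT0 τ (le_trans (le_max_left _ _) hτ)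
    simpa [dist_eq_norm] using this.le
  obtain ⟨M, hM⟩ := (isCompact_Icc (a := (0:ℝ)) (b := T)).exists_bound_of_continuousOn
    hv.continuousOn
  have hM0 : 0 ≤ M := le_trans (norm_nonneg _) (hM 0 ⟨le_refl 0, hT⟩)
  -- decay of the first-term bound
  have hdecay : Tendsto (fun t => T * M * Real.exp (κ * T) * Real.exp (-κ * t))
      atTop (nhds 0) := by
    have h1 : Tendsto (fun t : ℝ => -κ * t) atTop atBot := by
      have := tendsto_neg_atBot_iff.mpr (tendsto_id.const_mul_atTop hκ (f := fun t : ℝ => t))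
      simpa [neg_mul] using this
    have h2 := Real.tendsto_exp_atBot.comp h1
    simpa using h2.const_mul (T * M * Real.exp (κ * T))
  have hA : ∀ᶠ t in atTop, T * M * Real.exp (κ * T) * Real.exp (-κ * t) < ε / 2 :=
    hdecay.eventually_lt_const (half_pos hε)
  filter_upwards [eventually_ge_atTop T, hA] with t ht hAt
  have h0t : (0 : ℝ) ≤ t := le_trans hT ht
  set g : ℝ → ℝ := fun τ => Real.exp (-κ * (t - τ)) * ‖v τ‖ with hg
  have hgc : Continuous g := by
    exact (Real.continuous_exp.comp (continuous_const.mul (continuous_const.sub continuous_id))).mul hv.norm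
  have hnorm : ‖∫ τ in (0:ℝ)..t, Real.exp (-κ * (t - τ)) • v τ‖ ≤ ∫ τ in (0:ℝ)..t, g τ := by
    refine le_trans (intervalIntegral.norm_integral_le_integral_norm h0t) ?_
    refine le_of_eq (intervalIntegral.integral_congr ?_)
    intro τ _
    simp [hg, norm_smul, Real.abs_exp]
  have hint1 : IntervalIntegrable g MeasureTheory.volume 0 T := hgc.intervalIntegrable _ _
  have hint2 : IntervalIntegrable g MeasureTheory.volume T t := hgc.intervalIntegrable _ _
  have hsplit : ∫ τ in (0:ℝ)..t, g τ = (∫ τ in (0:ℝ)..T, g τ) + ∫ τ in T..t, g τ :=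
    (intervalIntegral.integral_add_adjacent_intervals hint1 hint2).symm
  -- bound on [0, T]
  have hb1 : (∫ τ in (0:ℝ)..T, g τ) ≤ T * M * Real.exp (κ * T) * Real.exp (-κ * t) := by
    have hmono : (∫ τ in (0:ℝ)..T, g τ) ≤ ∫ _τ in (0:ℝ)..T, M * Real.exp (-κ * (t - T)) := by
      refine intervalIntegral.integral_mono_on hT hint1 (intervalIntegrable_const) ?_
      intro τ hτ
      have h1 : Real.exp (-κ * (t - τ)) ≤ Real.exp (-κ * (t - T)) := by
        apply Real.exp_le_exp.mpr
        nlinarith [hτ.2, hκ.le]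
      have h2 : ‖v τ‖ ≤ M := hM τ hτ
      calc g τ ≤ Real.exp (-κ * (t - T)) * M :=
            mul_le_mul h1 h2 (norm_nonneg _) (Real.exp_nonneg _)
        _ = M * Real.exp (-κ * (t - T)) := by ring
    rw [intervalIntegral.integral_const] at hmono
    have : Real.exp (-κ * (t - T)) = Real.exp (κ * T) * Real.exp (-κ * t) := by
      rw [← Real.exp_add]; ring_nf
    rw [this] at hmono
    calc (∫ τ in (0:ℝ)..T, g τ) ≤ (T - 0) • (M * (Real.exp (κ * T) * Real.exp (-κ * t))) :=
          hmono
      _ = T * M * Real.exp (κ * T) * Real.exp (-κ * t) := by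
          simp [smul_eq_mul]; ring
  -- bound on [T, t]
  have hexpint : (∫ τ in T..t, Real.exp (-κ * (t - τ)))
      = 1 / κ - Real.exp (-κ * (t - T)) / κ := by
    have hderiv : ∀ τ ∈ Set.uIcc T t,
        HasDerivAt (fun τ => Real.exp (-κ * (t - τ)) / κ) (Real.exp (-κ * (t - τ))) τ := by
      intro τ _
      have hinner : HasDerivAt (fun τ : ℝ => -κ * (t - τ)) κ τ := by
        have : HasDerivAt (fun τ : ℝ => -κ * t + κ * τ) κ τ := by
          simpa using ((hasDerivAt_id τ).const_mul κ).const_add (-κ * t)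
        convert this using 2 with x
        ring
      have := ((Real.hasDerivAt_exp (-κ * (t - τ))).comp τ hinner).div_const κ
      simpa [mul_div_assoc, mul_div_cancel_right₀, hκ.ne'] using this
    have hcont : IntervalIntegrable (fun τ => Real.exp (-κ * (t - τ)))
        MeasureTheory.volume T t :=
      (Real.continuous_exp.comp (continuous_const.mul (continuous_const.sub continuous_id))).intervalIntegrable _ _
    have := intervalIntegral.integral_eq_sub_of_hasDerivAt hderiv hcont
    rw [this]
    simp
  have hb2 : (∫ τ in T..t, g τ) ≤ ε / 2 := by
    have hmono : (∫ τ in T..t, g τ)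
        ≤ ∫ τ in T..t, Real.exp (-κ * (t - τ)) * (κ * ε / 2) := by
      refine intervalIntegral.integral_mono_on ht hint2 ?_ ?_
      · exact ((Real.continuous_exp.comp (continuous_const.mul (continuous_const.sub continuous_id))).mul continuous_const).intervalIntegrable _ _
      · intro τ hτ
        exact mul_le_mul_of_nonneg_left (htail τ hτ.1) (Real.exp_nonneg _)
    have : (∫ τ in T..t, Real.exp (-κ * (t - τ)) * (κ * ε / 2))
        = (∫ τ in T..t, Real.exp (-κ * (t - τ))) * (κ * ε / 2) := by
      rw [← intervalIntegral.integral_mul_const]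
    rw [this, hexpint] at hmono
    refine le_trans hmono ?_
    have hexp_nonneg : 0 ≤ Real.exp (-κ * (t - T)) / κ := by positivity
    have : (1 / κ - Real.exp (-κ * (t - T)) / κ) * (κ * ε / 2) ≤ (1 / κ) * (κ * ε / 2) := by
      apply mul_le_mul_of_nonneg_right _ hεκ.le
      linarith
    refine le_trans this (le_of_eq ?_)
    field_simp
  calc ‖∫ τ in (0:ℝ)..t, Real.exp (-κ * (t - τ)) • v τ‖
      ≤ ∫ τ in (0:ℝ)..t, g τ := hnorm
    _ = (∫ τ in (0:ℝ)..T, g τ) + ∫ τ in T..t, g τ := hsplit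
    _ ≤ T * M * Real.exp (κ * T) * Real.exp (-κ * t) + ε / 2 := add_le_add hb1 hb2
    _ < ε / 2 + ε / 2 := by linarith
    _ = ε := by ring
end

section
/- Let κ > 0 and let p, p* : ℝ → EuclideanSpace ℝ (Fin 2) be such that p* is differentiable with continuous derivative and deriv p*(t) → 0 as t → +∞, and p is differentiable with deriv p t = -κ • (p t - p* t) for all t ∈ ℝ. Then ‖p t - p* t‖ → 0 as t → +∞. -/
/-!
The error `e = p - p*` satisfies `e' = -κ e + g` with `g = -ṗ* → 0`. If `‖g‖ ≤ δ` on `[T, ∞)`,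
the integrating factor `exp (κ (t - T))` turns the equation into
`‖(exp (κ (t - T)) • e)'‖ ≤ δ exp (κ (t - T))`, and the fencing theorem for derivative bounds gives
`‖e t‖ ≤ exp (-κ (t - T)) ‖e T‖ + δ / κ`. Let `t → ∞`, then `δ → 0`.
-/

open Filter

open Real Set Topology

section LinearDecay

variable {E : Type*} [NormedAddCommGroup E] [NormedSpace ℝ E] {f g : ℝ → E} {κ : ℝ}

theorem hasDerivAt_exp_smul_of_hasDerivAt_neg_smul_add {t : ℝ}
    (hf : HasDerivAt f (-κ • f t + g t) t) (T : ℝ) :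
    HasDerivAt (fun s => exp (κ * (s - T)) • f s) (exp (κ * (t - T)) • g t) t := by
  have hexp : HasDerivAt (fun s => exp (κ * (s - T))) (exp (κ * (t - T)) * κ) t := by
    simpa using (((hasDerivAt_id t).sub_const T).const_mul κ).exp
  refine (hexp.smul hf).congr_deriv ?_
  rw [smul_add, smul_smul, mul_neg, neg_smul]
  abel

theorem norm_le_exp_mul_add_of_hasDerivAt_neg_smul_add (hκ : 0 < κ)
    (hf : ∀ t, HasDerivAt f (-κ • f t + g t) t) {T δ : ℝ} (hg : ∀ t ≥ T, ‖g t‖ ≤ δ)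
    {t : ℝ} (ht : T ≤ t) : ‖f t‖ ≤ exp (-(κ * (t - T))) * ‖f T‖ + δ / κ := by
  set h := fun s => exp (κ * (s - T)) • f s
  have hh : ∀ s, HasDerivAt h (exp (κ * (s - T)) • g s) s := fun s =>
    hasDerivAt_exp_smul_of_hasDerivAt_neg_smul_add (hf s) T
  have hB : ∀ s, HasDerivAt (fun s => ‖f T‖ + δ / κ * (exp (κ * (s - T)) - 1))
      (δ * exp (κ * (s - T))) s := by
    intro s
    refine (((((hasDerivAt_id' s).sub_const T).const_mul κ).exp.sub_const 1).const_mul (δ / κ)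
      |>.const_add ‖f T‖).congr_deriv ?_
    field_simp
  have hh_bound : ∀ s ∈ Ico T t, ‖exp (κ * (s - T)) • g s‖ ≤ δ * exp (κ * (s - T)) := by
    intro s hs
    rw [norm_smul, norm_of_nonneg (exp_pos _).le, mul_comm]
    exact mul_le_mul_of_nonneg_right (hg s hs.1) (exp_pos _).le
  have hfence := image_norm_le_of_norm_deriv_right_le_deriv_boundary
    (fun s _ => (hh s).continuousAt.continuousWithinAt) (fun s _ => (hh s).hasDerivWithinAt)
    (by simp [h]) hB hh_bound ⟨ht, le_rfl⟩
  have hδ : 0 ≤ δ / κ := div_nonneg ((norm_nonneg _).trans (hg T le_rfl)) hκ.le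
  rw [norm_smul, norm_of_nonneg (exp_pos _).le] at hfence
  calc ‖f t‖ = exp (-(κ * (t - T))) * (exp (κ * (t - T)) * ‖f t‖) := by
        rw [← mul_assoc, ← exp_add, neg_add_cancel, exp_zero, one_mul]
    _ ≤ exp (-(κ * (t - T))) * (‖f T‖ + δ / κ * exp (κ * (t - T))) := by
        gcongr
        linarith
    _ = exp (-(κ * (t - T))) * ‖f T‖ + δ / κ := by
        rw [mul_add, mul_left_comm, ← exp_add, neg_add_cancel, exp_zero, mul_one]

theorem tendsto_zero_of_hasDerivAt_neg_smul_add (hκ : 0 < κ)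
    (hf : ∀ t, HasDerivAt f (-κ • f t + g t) t) (hg : Tendsto g atTop (𝓝 0)) :
    Tendsto f atTop (𝓝 0) := by
  refine NormedAddGroup.tendsto_nhds_zero.2 fun ε hε => ?_
  obtain ⟨T, hT⟩ := eventually_atTop.1
    (NormedAddGroup.tendsto_nhds_zero.1 hg (κ * (ε / 2)) (by positivity))
  have hdecay : Tendsto (fun t => exp (-(κ * (t - T))) * ‖f T‖) atTop (𝓝 0) := by
    have hlin : Tendsto (fun t => κ * (t - T)) atTop atTop :=
      (tendsto_atTop_add_const_right atTop (-T) tendsto_id).const_mul_atTop hκ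
    simpa using (tendsto_exp_atBot.comp (tendsto_neg_atTop_atBot.comp hlin)).mul_const ‖f T‖
  filter_upwards [hdecay.eventually (gt_mem_nhds (half_pos hε)), eventually_ge_atTop T]
    with t hsmall hT_le
  have hbound := norm_le_exp_mul_add_of_hasDerivAt_neg_smul_add hκ hf
    (fun s hs => (hT s hs).le) hT_le
  rw [mul_div_cancel_left₀ _ hκ.ne'] at hbound
  linarith

end LinearDecay

theorem asymptotic_tracking_general
    (κ : ℝ) (hκ : 0 < κ)
    (p pstar : ℝ → EuclideanSpace ℝ (Fin 2))
    (hpstar_diff : Differentiable ℝ pstar)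
    (hpstar_vel : Tendsto (deriv pstar) atTop (nhds 0))
    (hp_diff : Differentiable ℝ p)
    (hode : ∀ t : ℝ, deriv p t = -κ • (p t - pstar t)) :
    Tendsto (fun t => ‖p t - pstar t‖) atTop (nhds 0) := by
  have herror : ∀ t, HasDerivAt (fun s => p s - pstar s)
      (-κ • (p t - pstar t) + -deriv pstar t) t := fun t => by
    rw [← hode t, ← sub_eq_add_neg]
    exact (hp_diff t).hasDerivAt.sub (hpstar_diff t).hasDerivAt
  exact tendsto_norm_zero.comp
    (tendsto_zero_of_hasDerivAt_neg_smul_add hκ herror (by simpa using hpstar_vel.neg))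

/-- Asymptotic tracking of the moving optimal point under proportional control. -/
theorem asymptotic_tracking
    (κ : ℝ) (hκ : 0 < κ)
    (p pstar : ℝ → EuclideanSpace ℝ (Fin 2))
    (hpstar_diff : Differentiable ℝ pstar)
    (hpstar_cont : Continuous (deriv pstar))
    (hpstar_vel : Tendsto (deriv pstar) atTop (nhds 0))
    (hp_diff : Differentiable ℝ p)
    (hode : ∀ t : ℝ, deriv p t = -κ • (p t - pstar t)) :
    Tendsto (fun t => ‖p t - pstar t‖) atTop (nhds 0) :=
  asymptotic_tracking_general κ hκ p pstar hpstar_diff hpstar_vel hp_diff hode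
end
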